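/- arXiv:2604.12940 — 4 statements merged into one kernel-verified Lean document; each statement's English description precedes it below -/
import Mathlib

section
/- Suppose f, g satisfy the Schrödinger fixed-point equations for a bounded nonnegative cost c with ∫ g dν = 0 and ∫ f dμ = EOT_c^λ(μ,ν) ≥ 0. Then ‖f‖_∞ ≤ ‖c‖_∞ and ‖g‖_∞ ≤ ‖c‖_∞. -/
/-!
Each potential is a soft-min `-λ log ∫ exp (φ / λ)` of the other potential minus the cost.
By Jensen, `∫ exp (f / λ) dμ ≥ exp (∫ f dμ / λ) ≥ 1`, and likewise for `g` since `∫ g dν = 0`;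
as `c ≤ ‖c‖_∞`, the integral defining `g y` (resp. `f x`) is then at least `exp (-‖c‖_∞ / λ)`,
giving `f, g ≤ ‖c‖_∞`. With these upper bounds and `c ≥ 0` the integrands are at most
`exp (‖c‖_∞ / λ)`, which gives `f, g ≥ -‖c‖_∞`.
-/

open MeasureTheory Real

section SoftMin

variable {X : Type*} [MeasurableSpace X] {m : Measure X} {lam C : ℝ}

lemma integrable_exp_div_of_le [IsFiniteMeasure m] {φ : X → ℝ} (hφ : Measurable φ)
    (hlam : 0 < lam) (hφC : ∀ x, φ x ≤ C) : Integrable (fun x => exp (φ x / lam)) m :=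
  .of_bound (hφ.div_const lam).exp.aestronglyMeasurable (exp (C / lam)) <| ae_of_all _ fun x => by
    rw [norm_of_nonneg (exp_pos _).le]
    gcongr
    exact hφC x

lemma one_le_integral_exp_div [IsProbabilityMeasure m] {h : X → ℝ} (hlam : 0 ≤ lam)
    (hi : Integrable h m) (hie : Integrable (fun x => exp (h x / lam)) m)
    (h0 : 0 ≤ ∫ x, h x ∂m) : 1 ≤ ∫ x, exp (h x / lam) ∂m :=
  calc 1 = exp 0 := exp_zero.symm
    _ ≤ exp (∫ x, h x / lam ∂m) := by rw [integral_div]; gcongr; positivity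
    _ ≤ ∫ x, exp (h x / lam) ∂m :=
      convexOn_exp.map_integral_le continuous_exp.continuousOn isClosed_univ
        (ae_of_all _ fun _ => Set.mem_univ _) (hi.div_const lam) hie

lemma neg_mul_log_integral_exp_div_le {φ ψ : X → ℝ} (hlam : 0 < lam)
    (hφ : Integrable (fun x => exp (φ x / lam)) m) (hψ : Integrable (fun x => exp (ψ x / lam)) m)
    (hψφ : ∀ x, ψ x - C ≤ φ x) (hψ_one : 1 ≤ ∫ x, exp (ψ x / lam) ∂m) :
    -lam * log (∫ x, exp (φ x / lam) ∂m) ≤ C := by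
  have hI : exp (-C / lam) ≤ ∫ x, exp (φ x / lam) ∂m :=
    calc exp (-C / lam) ≤ exp (-C / lam) * ∫ x, exp (ψ x / lam) ∂m :=
          le_mul_of_one_le_right (exp_pos _).le hψ_one
      _ = ∫ x, exp (-C / lam) * exp (ψ x / lam) ∂m := (integral_const_mul _ _).symm
      _ ≤ ∫ x, exp (φ x / lam) ∂m := integral_mono (hψ.const_mul _) hφ fun x => by
          rw [← exp_add, ← add_div]
          gcongr
          linarith [hψφ x]
  have hlog := (le_log_iff_exp_le ((exp_pos _).trans_le hI)).2 hI
  rw [div_le_iff₀ hlam] at hlog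
  linarith

lemma neg_le_neg_mul_log_integral_exp_div [IsProbabilityMeasure m] {φ : X → ℝ} (hlam : 0 < lam)
    (hφ : Integrable (fun x => exp (φ x / lam)) m) (hφC : ∀ x, φ x ≤ C) :
    -C ≤ -lam * log (∫ x, exp (φ x / lam) ∂m) := by
  have hI : ∫ x, exp (φ x / lam) ∂m ≤ exp (C / lam) :=
    calc ∫ x, exp (φ x / lam) ∂m ≤ ∫ _, exp (C / lam) ∂m :=
          integral_mono hφ (integrable_const _) fun x => by gcongr; exact hφC x
      _ = exp (C / lam) := by simp
  have hlog := (log_le_iff_le_exp (integral_exp_pos hφ)).2 hI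
  rw [le_div_iff₀ hlam] at hlog
  linarith

end SoftMin

theorem eot_potentials_sup_norm_bound_general
    {X : Type*} [MeasurableSpace X]
    (μ ν : Measure X) [IsProbabilityMeasure μ] [IsProbabilityMeasure ν]
    (c : X → X → ℝ) (Cc : ℝ)
    (hc_meas : Measurable (Function.uncurry c))
    (hc_nonneg : ∀ x y, 0 ≤ c x y)
    (hc_bdd : ∀ x y, c x y ≤ Cc)
    (lam : ℝ) (hlam : 0 < lam)
    (f g : X → ℝ)
    (hf_meas : Measurable f) (hg_meas : Measurable g)
    (hf_bdd : ∃ B, ∀ x, |f x| ≤ B) (hg_bdd : ∃ B, ∀ y, |g y| ≤ B)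
    (hg_norm : ∫ y, g y ∂ν = 0)
    (hf_int_nonneg : 0 ≤ ∫ x, f x ∂μ)
    (hfix_f : ∀ x, f x = -lam * Real.log (∫ y, Real.exp ((g y - c x y) / lam) ∂ν))
    (hfix_g : ∀ y, g y = -lam * Real.log (∫ x, Real.exp ((f x - c x y) / lam) ∂μ)) :
    (∀ x, |f x| ≤ Cc) ∧ (∀ y, |g y| ≤ Cc) := by
  obtain ⟨Bf, hBf⟩ := hf_bdd
  obtain ⟨Bg, hBg⟩ := hg_bdd
  have hexp_f : Integrable (fun x => exp (f x / lam)) μ :=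
    integrable_exp_div_of_le hf_meas hlam fun x => le_of_abs_le (hBf x)
  have hexp_g : Integrable (fun y => exp (g y / lam)) ν :=
    integrable_exp_div_of_le hg_meas hlam fun y => le_of_abs_le (hBg y)
  have hexp_fc (y : X) : Integrable (fun x => exp ((f x - c x y) / lam)) μ :=
    integrable_exp_div_of_le (hf_meas.sub hc_meas.of_uncurry_right) hlam
      fun x => (sub_le_self _ (hc_nonneg x y)).trans (le_of_abs_le (hBf x))
  have hexp_gc (x : X) : Integrable (fun y => exp ((g y - c x y) / lam)) ν :=
    integrable_exp_div_of_le (hg_meas.sub hc_meas.of_uncurry_left) hlam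
      fun y => (sub_le_self _ (hc_nonneg x y)).trans (le_of_abs_le (hBg y))
  have hf_one : 1 ≤ ∫ x, exp (f x / lam) ∂μ := one_le_integral_exp_div hlam.le
    (.of_bound hf_meas.aestronglyMeasurable Bf (ae_of_all _ hBf)) hexp_f hf_int_nonneg
  have hg_one : 1 ≤ ∫ y, exp (g y / lam) ∂ν := one_le_integral_exp_div hlam.le
    (.of_bound hg_meas.aestronglyMeasurable Bg (ae_of_all _ hBg)) hexp_g hg_norm.ge
  have hf_le (x : X) : f x ≤ Cc := (hfix_f x).trans_le <|
    neg_mul_log_integral_exp_div_le hlam (hexp_gc x) hexp_g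
      (fun y => sub_le_sub_left (hc_bdd x y) _) hg_one
  have hg_le (y : X) : g y ≤ Cc := (hfix_g y).trans_le <|
    neg_mul_log_integral_exp_div_le hlam (hexp_fc y) hexp_f
      (fun x => sub_le_sub_left (hc_bdd x y) _) hf_one
  have hf_ge (x : X) : -Cc ≤ f x := (hfix_f x).symm ▸
    neg_le_neg_mul_log_integral_exp_div hlam (hexp_gc x)
      fun y => (sub_le_self _ (hc_nonneg x y)).trans (hg_le y)
  have hg_ge (y : X) : -Cc ≤ g y := (hfix_g y).symm ▸
    neg_le_neg_mul_log_integral_exp_div hlam (hexp_fc y)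
      fun x => (sub_le_self _ (hc_nonneg x y)).trans (hf_le x)
  exact ⟨fun x => abs_le.2 ⟨hf_ge x, hf_le x⟩, fun y => abs_le.2 ⟨hg_ge y, hg_le y⟩⟩

/-- If `f, g` solve the Schrödinger system for a bounded nonnegative cost,
with `∫ g dν = 0` and `∫ f dμ = EOT ≥ 0`, then `‖f‖_∞ ≤ ‖c‖_∞` and `‖g‖_∞ ≤ ‖c‖_∞`. -/
theorem eot_potentials_sup_norm_bound
    {X : Type*} [MeasurableSpace X] [Nonempty X]
    (μ ν : Measure X) [IsProbabilityMeasure μ] [IsProbabilityMeasure ν]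
    (c : X → X → ℝ) (Cc : ℝ)
    (hc_meas : Measurable (Function.uncurry c))
    (hc_nonneg : ∀ x y, 0 ≤ c x y)
    (hc_bdd : ∀ x y, c x y ≤ Cc)
    (lam : ℝ) (hlam : 0 < lam)
    (f g : X → ℝ)
    (hf_meas : Measurable f) (hg_meas : Measurable g)
    (hf_bdd : ∃ B, ∀ x, |f x| ≤ B) (hg_bdd : ∃ B, ∀ y, |g y| ≤ B)
    (hg_norm : ∫ y, g y ∂ν = 0)
    (hf_int_nonneg : 0 ≤ ∫ x, f x ∂μ)
    (hfix_f : ∀ x, f x = -lam * Real.log (∫ y, Real.exp ((g y - c x y) / lam) ∂ν))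
    (hfix_g : ∀ y, g y = -lam * Real.log (∫ x, Real.exp ((f x - c x y) / lam) ∂μ)) :
    (∀ x, |f x| ≤ Cc) ∧ (∀ y, |g y| ≤ Cc) :=
  eot_potentials_sup_norm_bound_general μ ν c Cc hc_meas hc_nonneg hc_bdd lam hlam f g hf_meas
    hg_meas hf_bdd hg_bdd hg_norm hf_int_nonneg hfix_f hfix_g
end

section
/- The map ξ: C_b(X) × C_b(X) → C_b(X²) given by ξ(f,g)(x,y) = exp((f(x)+g(y)-c(x,y))/λ), restricted to pairs with ‖f‖_∞, ‖g‖_∞ ≤ ‖c‖_∞, is Fréchet differentiable with derivative Dξ_{(f,g)}(h_f, h_g)(x,y) = ξ(f,g)(x,y)·(h_f(x)+h_g(y))/λ. That is, sup_{x,y} |ξ(f+t h_f, g+t h_g)(x,y) - ξ(f,g)(x,y) - t ξ(f,g)(x,y)(h_f(x)+h_g(y))/λ| = o(t) uniformly over directions (h_f,h_g) with max(‖h_f‖_∞,‖h_g‖_∞) = 1 as t ↘ 0. -/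
open Real

/-- The map `(f,g) ↦ ξ(f,g)`, `ξ(f,g)(x,y) = exp((f x + g y - c x y)/λ)`,
restricted to pairs with `‖f‖_∞, ‖g‖_∞ ≤ ‖c‖_∞`, is Fréchet differentiable with derivative
`(h_f,h_g) ↦ ξ(f,g)·(h_f + h_g)/λ`: the remainder is `o(t)` uniformly in `(x,y)` and
uniformly over directions of unit sup-norm. -/
theorem eot_density_frechet_differentiable
    {X : Type*} [TopologicalSpace X]
    (c : X → X → ℝ) (Cc : ℝ)
    (hc_cont : Continuous (Function.uncurry c))
    (hc_nonneg : ∀ x y, 0 ≤ c x y)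
    (hc_bdd : ∀ x y, c x y ≤ Cc)
    (lam : ℝ) (hlam : 0 < lam)
    (f g : X → ℝ) (hf_cont : Continuous f) (hg_cont : Continuous g)
    (hf_bdd : ∀ x, |f x| ≤ Cc) (hg_bdd : ∀ y, |g y| ≤ Cc) :
    ∀ ε > (0 : ℝ), ∃ δ > (0 : ℝ), ∀ t : ℝ, 0 < t → t < δ →
      ∀ hf hg : X → ℝ, (∀ x, |hf x| ≤ 1) → (∀ y, |hg y| ≤ 1) →
        ∀ x y,
          |Real.exp ((f x + t * hf x + (g y + t * hg y) - c x y) / lam)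
            - Real.exp ((f x + g y - c x y) / lam)
            - t * (Real.exp ((f x + g y - c x y) / lam) * (hf x + hg y) / lam)|
          ≤ ε * t := by
  intro ε hε
  refine ⟨min (lam / 2) (ε * lam ^ 2 * Real.exp (-(2 * Cc / lam)) / 4), ?_, ?_⟩
  · have := Real.exp_pos (-(2 * Cc / lam)); positivity
  intro t ht htδ hf hg hhf hhg x y
  set a := (f x + g y - c x y) / lam with ha
  set s := t * (hf x + hg y) / lam with hs
  have hCc : 0 ≤ Cc := le_trans (abs_nonneg _) (hf_bdd x)
  have hsabs : |s| ≤ 2 * t / lam := by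
    have h2' : |hf x + hg y| ≤ 2 :=
      (abs_add_le _ _).trans (by linarith [hhf x, hhg y])
    calc |s| = t * |hf x + hg y| / lam := by
          rw [hs, abs_div, abs_of_pos hlam, abs_mul, abs_of_pos ht]
      _ ≤ t * 2 / lam := by gcongr
      _ = 2 * t / lam := by ring
  have ht1 : t < lam / 2 := lt_of_lt_of_le htδ (min_le_left _ _)
  have hs1 : |s| ≤ 1 := by
    calc |s| ≤ 2 * t / lam := hsabs
      _ ≤ 1 := by rw [div_le_one hlam]; linarith
  have key : |Real.exp s - 1 - s| ≤ s ^ 2 := Real.abs_exp_sub_one_sub_id_le hs1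
  have hrw : (f x + t * hf x + (g y + t * hg y) - c x y) / lam = a + s := by
    rw [ha, hs]; field_simp; ring
  have h2 : t * (Real.exp a * (hf x + hg y) / lam) = Real.exp a * s := by
    rw [hs]; ring
  rw [hrw, h2, Real.exp_add]
  have hsplit : Real.exp a * Real.exp s - Real.exp a - Real.exp a * s
      = Real.exp a * (Real.exp s - 1 - s) := by ring
  rw [hsplit, abs_mul, abs_of_pos (Real.exp_pos a)]
  have hea : Real.exp a ≤ Real.exp (2 * Cc / lam) := by
    apply Real.exp_le_exp.mpr
    rw [ha]
    have hnum : f x + g y - c x y ≤ 2 * Cc := by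
      have := (abs_le.mp (hf_bdd x)).2
      have := (abs_le.mp (hg_bdd y)).2
      have := hc_nonneg x y
      linarith
    gcongr
  have hs2 : s ^ 2 ≤ (2 * t / lam) ^ 2 := by
    rw [← sq_abs s]
    exact pow_le_pow_left₀ (abs_nonneg _) hsabs 2
  have ht2 : t < ε * lam ^ 2 * Real.exp (-(2 * Cc / lam)) / 4 :=
    lt_of_lt_of_le htδ (min_le_right _ _)
  set E := Real.exp (2 * Cc / lam) with hE
  have hEpos : 0 < E := Real.exp_pos _
  have hEneg : Real.exp (-(2 * Cc / lam)) = 1 / E := by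
    simp [hE, Real.exp_neg]
  rw [hEneg] at ht2
  calc Real.exp a * |Real.exp s - 1 - s|
      ≤ E * (2 * t / lam) ^ 2 := by
        apply mul_le_mul hea (key.trans hs2) (abs_nonneg _) hEpos.le
    _ = (E * 4 / lam ^ 2 * t) * t := by field_simp; ring
    _ ≤ ε * t := by
        apply mul_le_mul_of_nonneg_right _ ht.le
        rw [div_mul_eq_mul_div, div_le_iff₀ (by positivity)]
        have : t * (E * 4) < ε * lam ^ 2 * (1 / E) / 4 * (E * 4) := by
          apply mul_lt_mul_of_pos_right ht2 (by positivity)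
        calc E * 4 * t = t * (E * 4) := by ring
          _ ≤ ε * lam ^ 2 * (1 / E) / 4 * (E * 4) := this.le
          _ = ε * lam ^ 2 := by field_simp
end

section
/- Let η be a probability measure on X and M: X × [0,1] → ℝ be such that for each x, r ↦ M(x,r) is monotone nondecreasing, right-continuous with M(x,0) = 0, and M(·,1) ∈ L²(η). Let G = {M(·,r) : r ∈ [0,1]}. Then for every ε with 0 < ε < 4√2·‖M(·,1)‖_{L²(η)}, the class G can be covered by at most ⌊32‖M(·,1)‖²_{L²(η)}/ε²⌋ brackets of L²(η)-length less than ε; in particular the bracketing numbers N_{[]}(ε, G, L²(η)) grow at most polynomially in 1/ε. -/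
open MeasureTheory Real Filter Topology Set

/-!
Write `F = M(·,1)` and `h(s) = ∫ F · M(·,s) dη`. For `r ≤ s` we have `0 ≤ M(·,s) - M(·,r) ≤ F`,
hence `(M(·,s) - M(·,r))² ≤ F · (M(·,s) - M(·,r))` and `‖M(·,s) - M(·,r)‖² ≤ h(s) - h(r)`; the same
holds with `M(·,s)` replaced by its left limit `M(·,s⁻)`. By dominated convergence `h` is
nondecreasing and right-continuous, with `h(0) = 0` and `h(1) = ‖F‖²`. Cutting `[0,1]` at the first
points `t_j` where `h` reaches `j δ`, `δ = ε²/2`, the brackets `[M(·,t_j), M(·,t_{j+1}⁻)]` have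
squared length at most `δ`; with the degenerate bracket at `r = 1` there are `⌊2‖F‖²/ε²⌋ + 2` of
them, which is at most `⌊32‖F‖²/ε²⌋` once `ε ≤ ‖F‖`. For `ε > ‖F‖` the single bracket `[0, F]`
suffices.
-/

theorem exists_mem_Ico_of_le_of_lt {α : Type*} [LinearOrder α] {t : ℕ → α} {r : α}
    (h0 : t 0 ≤ r) : ∀ {J : ℕ}, r < t J → ∃ j < J, r ∈ Ico (t j) (t (j + 1))
  | 0, hJ => absurd h0 hJ.not_ge
  | J + 1, hJ => by
    rcases lt_or_ge r (t J) with hr | hr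
    · obtain ⟨j, hj, hrj⟩ := exists_mem_Ico_of_le_of_lt h0 hr
      exact ⟨j, hj.trans J.lt_succ_self, hrj⟩
    · exact ⟨J, J.lt_succ_self, hr, hJ⟩

section LevelPartition

variable {h : ℝ → ℝ} {a b δ : ℝ}

noncomputable def levelPartition (h : ℝ → ℝ) (a b δ : ℝ) (j : ℕ) : ℝ :=
  sInf (insert b {s ∈ Icc a b | h a + j * δ ≤ h s})

theorem bddBelow_insert_sep_Icc (hab : a ≤ b) (p : ℝ → Prop) :
    BddBelow (insert b {s ∈ Icc a b | p s}) :=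
  ⟨a, by rintro s (rfl | hs); exacts [hab, hs.1.1]⟩

theorem levelPartition_mem_Icc (hab : a ≤ b) (j : ℕ) : levelPartition h a b δ j ∈ Icc a b :=
  ⟨le_csInf (insert_nonempty _ _) (by rintro s (rfl | hs); exacts [hab, hs.1.1]),
    csInf_le (bddBelow_insert_sep_Icc hab _) (mem_insert _ _)⟩

theorem levelPartition_zero (hab : a ≤ b) : levelPartition h a b δ 0 = a :=
  le_antisymm
    (csInf_le (bddBelow_insert_sep_Icc hab _) (mem_insert_of_mem _ ⟨left_mem_Icc.2 hab, by simp⟩))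
    (levelPartition_mem_Icc hab 0).1

theorem levelPartition_eq_right_of_lt (hmono : MonotoneOn h (Icc a b)) (hab : a ≤ b) {j : ℕ}
    (hj : h b < h a + j * δ) : levelPartition h a b δ j = b := by
  have hempty : {s ∈ Icc a b | h a + j * δ ≤ h s} = ∅ :=
    eq_empty_of_forall_notMem fun s hs =>
      (hs.2.trans (hmono hs.1 (right_mem_Icc.2 hab) hs.1.2)).not_gt hj
  rw [levelPartition, hempty, insert_empty_eq, csInf_singleton]

theorem apply_lt_of_lt_levelPartition (hab : a ≤ b) {j : ℕ} {r : ℝ} (hr : r ∈ Icc a b)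
    (hrj : r < levelPartition h a b δ j) : h r < h a + j * δ := by
  by_contra! hle
  exact (csInf_le (bddBelow_insert_sep_Icc hab _) (mem_insert_of_mem _ ⟨hr, hle⟩)).not_gt hrj

theorem le_apply_levelPartition (hmono : MonotoneOn h (Icc a b))
    (hrc : ∀ r ∈ Ico a b, ContinuousWithinAt h (Ici r) r) (hab : a ≤ b) {j : ℕ}
    (hj : levelPartition h a b δ j < b) : h a + j * δ ≤ h (levelPartition h a b δ j) := by
  set t := levelPartition h a b δ j
  have ht := levelPartition_mem_Icc (h := h) (δ := δ) hab j
  have hright : ∀ u ∈ Ioc t b, h a + j * δ ≤ h u := by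
    intro u hu
    obtain ⟨s, hs, hsu⟩ := exists_lt_of_csInf_lt (insert_nonempty _ _) hu.1
    rcases hs with rfl | hs
    · exact absurd hu.2 hsu.not_ge
    · exact hs.2.trans (hmono hs.1 ⟨hs.1.1.trans hsu.le, hu.2⟩ hsu.le)
  exact ge_of_tendsto ((hrc t ⟨ht.1, hj⟩).mono Ioi_subset_Ici_self)
    (eventually_of_mem (Ioc_mem_nhdsGT hj) hright)

theorem apply_le_apply_levelPartition_add (hmono : MonotoneOn h (Icc a b))
    (hrc : ∀ r ∈ Ico a b, ContinuousWithinAt h (Ici r) r) (hab : a ≤ b) {j : ℕ} {r : ℝ}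
    (hr : r ∈ Ico (levelPartition h a b δ j) (levelPartition h a b δ (j + 1))) :
    h r ≤ h (levelPartition h a b δ j) + δ := by
  have hnext := levelPartition_mem_Icc (h := h) (δ := δ) hab (j + 1)
  have hr' : r ∈ Icc a b :=
    ⟨(levelPartition_mem_Icc hab j).1.trans hr.1, hr.2.le.trans hnext.2⟩
  have hlt := apply_lt_of_lt_levelPartition hab hr' hr.2
  have hle := le_apply_levelPartition hmono hrc hab (hr.1.trans_lt (hr.2.trans_le hnext.2))
  push_cast at hlt
  linarith

end LevelPartition

section SupLeft

variable {a b c r : ℝ}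

noncomputable def leftApprox (a b : ℝ) (n : ℕ) : ℝ := max a (b - 1 / (n + 1))

theorem monotone_leftApprox : Monotone (leftApprox a b) := fun _ _ hmn =>
  max_le_max le_rfl (sub_le_sub_left (Nat.one_div_le_one_div hmn) b)

theorem left_le_leftApprox (n : ℕ) : a ≤ leftApprox a b n := le_max_left _ _

theorem leftApprox_le (n : ℕ) : leftApprox a b n ≤ max a b :=
  max_le_max le_rfl (sub_le_self b (by positivity))

theorem leftApprox_eq_or_mem_Ico (n : ℕ) : leftApprox a b n = a ∨ leftApprox a b n ∈ Ico a b := by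
  rcases le_total (b - 1 / (n + 1)) a with h | h
  · exact .inl (max_eq_left h)
  · refine .inr ⟨left_le_leftApprox n, ?_⟩
    rw [leftApprox, max_eq_right h]
    exact sub_lt_self b (by positivity)

theorem eventually_lt_leftApprox (hr : r < b) : ∀ᶠ n in atTop, r < leftApprox a b n := by
  have hlim : Tendsto (fun n : ℕ => b - 1 / ((n : ℝ) + 1)) atTop (𝓝 b) := by
    simpa using tendsto_one_div_add_atTop_nhds_zero_nat.const_sub b
  exact (hlim.eventually (lt_mem_nhds hr)).mono fun n hn => lt_max_of_lt_right hn

/-- For `g` monotone and `a ≤ b`, this is `max (g a) (g (b⁻))`, with `g (b⁻)` the left limit. -/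
noncomputable def supLeft (g : ℝ → ℝ) (a b : ℝ) : ℝ := ⨆ n : ℕ, g (leftApprox a b n)

variable {g : ℝ → ℝ}

theorem leftApprox_mem_Icc (hac : a ≤ c) (hbc : b ≤ c) (n : ℕ) : leftApprox a b n ∈ Icc a c :=
  ⟨left_le_leftApprox n, (leftApprox_le n).trans (max_le hac hbc)⟩

theorem bddAbove_range_apply_leftApprox (hg : MonotoneOn g (Icc a c)) (hac : a ≤ c)
    (hbc : b ≤ c) : BddAbove (range fun n => g (leftApprox a b n)) :=
  ⟨g c, by
    rintro _ ⟨n, rfl⟩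
    exact hg (leftApprox_mem_Icc hac hbc n) (right_mem_Icc.2 hac) (leftApprox_mem_Icc hac hbc n).2⟩

theorem tendsto_supLeft (hg : MonotoneOn g (Icc a c)) (hac : a ≤ c) (hbc : b ≤ c) :
    Tendsto (fun n => g (leftApprox a b n)) atTop (𝓝 (supLeft g a b)) :=
  tendsto_atTop_ciSup
    (fun _ _ hmn => hg (leftApprox_mem_Icc hac hbc _) (leftApprox_mem_Icc hac hbc _)
      (monotone_leftApprox hmn))
    (bddAbove_range_apply_leftApprox hg hac hbc)

theorem supLeft_le (hg : MonotoneOn g (Icc a c)) (hac : a ≤ c) (hbc : b ≤ c) :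
    supLeft g a b ≤ g c :=
  ciSup_le fun n =>
    hg (leftApprox_mem_Icc hac hbc n) (right_mem_Icc.2 hac) (leftApprox_mem_Icc hac hbc n).2

theorem apply_left_le_supLeft (hg : MonotoneOn g (Icc a c)) (hac : a ≤ c) (hbc : b ≤ c) :
    g a ≤ supLeft g a b :=
  (hg (left_mem_Icc.2 hac) (leftApprox_mem_Icc hac hbc 0) (left_le_leftApprox 0)).trans
    (le_ciSup (bddAbove_range_apply_leftApprox hg hac hbc) 0)

theorem apply_le_supLeft (hg : MonotoneOn g (Icc a c)) (hac : a ≤ c) (hbc : b ≤ c)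
    (hr : r ∈ Ico a b) : g r ≤ supLeft g a b := by
  obtain ⟨n, hn⟩ := (eventually_lt_leftApprox (a := a) hr.2).exists
  exact (hg ⟨hr.1, hr.2.le.trans hbc⟩ (leftApprox_mem_Icc hac hbc n) hn.le).trans
    (le_ciSup (bddAbove_range_apply_leftApprox hg hac hbc) n)

end SupLeft

section L2Estimates

variable {X : Type*} [MeasurableSpace X] {η : Measure X}

theorem integrable_mul_of_nonneg_of_le {F f : X → ℝ} (hF : MemLp F 2 η)
    (hf : AEStronglyMeasurable f η) (hf0 : ∀ x, 0 ≤ f x) (hfF : ∀ x, f x ≤ F x) :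
    Integrable (fun x => F x * f x) η :=
  hF.integrable_mul <| hF.of_le hf <| ae_of_all _ fun x => by
    rw [norm_of_nonneg (hf0 x)]
    exact (hfF x).trans (le_norm_self _)

theorem integral_sq_sub_le_integral_mul_sub {F f g : X → ℝ} (hF : MemLp F 2 η)
    (hf : AEStronglyMeasurable f η) (hg : AEStronglyMeasurable g η) (hf0 : ∀ x, 0 ≤ f x)
    (hfg : ∀ x, f x ≤ g x) (hgF : ∀ x, g x ≤ F x) :
    ∫ x, (g x - f x) ^ 2 ∂η ≤ ∫ x, F x * g x ∂η - ∫ x, F x * f x ∂η := by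
  have hFg := integrable_mul_of_nonneg_of_le hF hg (fun x => (hf0 x).trans (hfg x)) hgF
  have hFf := integrable_mul_of_nonneg_of_le hF hf hf0 fun x => (hfg x).trans (hgF x)
  rw [← integral_sub hFg hFf]
  refine integral_mono_of_nonneg (ae_of_all _ fun x => sq_nonneg _) (hFg.sub hFf)
    (ae_of_all _ fun x => ?_)
  have := hf0 x
  have := hfg x
  have := hgF x
  change _ ≤ F x * g x - F x * f x
  nlinarith

end L2Estimates

section MonotoneFamily

variable {X : Type*} [MeasurableSpace X] {η : Measure X}

structure IsMonotoneL2Family (η : Measure X) (M : X → ℝ → ℝ) : Prop where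
  measurable : ∀ r, Measurable fun x => M x r
  monotoneOn : ∀ x, MonotoneOn (M x) (Icc 0 1)
  apply_zero : ∀ x, M x 0 = 0
  memLp_one : MemLp (fun x => M x 1) 2 η

noncomputable def envelopeInner (η : Measure X) (M : X → ℝ → ℝ) (s : ℝ) : ℝ :=
  ∫ x, M x 1 * M x s ∂η

theorem envelopeInner_one (M : X → ℝ → ℝ) : envelopeInner η M 1 = ∫ x, M x 1 ^ 2 ∂η := by
  simp only [envelopeInner, sq]

namespace IsMonotoneL2Family

variable {M : X → ℝ → ℝ} {r : ℝ}

theorem nonneg (hM : IsMonotoneL2Family η M) (hr : r ∈ Icc 0 1) (x : X) : 0 ≤ M x r :=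
  hM.apply_zero x ▸ hM.monotoneOn x (left_mem_Icc.2 zero_le_one) hr hr.1

theorem le_one (hM : IsMonotoneL2Family η M) (hr : r ∈ Icc 0 1) (x : X) : M x r ≤ M x 1 :=
  hM.monotoneOn x hr (right_mem_Icc.2 zero_le_one) hr.2

theorem nonneg_one (hM : IsMonotoneL2Family η M) (x : X) : 0 ≤ M x 1 :=
  hM.nonneg (right_mem_Icc.2 zero_le_one) x

theorem integrable_mul (hM : IsMonotoneL2Family η M) (hr : r ∈ Icc 0 1) :
    Integrable (fun x => M x 1 * M x r) η :=
  integrable_mul_of_nonneg_of_le hM.memLp_one (hM.measurable r).aestronglyMeasurable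
    (hM.nonneg hr) (hM.le_one hr)

theorem envelopeInner_zero (hM : IsMonotoneL2Family η M) : envelopeInner η M 0 = 0 := by
  simp [envelopeInner, hM.apply_zero]

theorem monotoneOn_envelopeInner (hM : IsMonotoneL2Family η M) :
    MonotoneOn (envelopeInner η M) (Icc 0 1) := fun _ hr _ hs hrs =>
  integral_mono (hM.integrable_mul hr) (hM.integrable_mul hs) fun x =>
    mul_le_mul_of_nonneg_left (hM.monotoneOn x hr hs hrs) (hM.nonneg_one x)

theorem tendsto_envelopeInner (hM : IsMonotoneL2Family η M) {ι : Type*} {l : Filter ι}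
    [l.IsCountablyGenerated] {s : ι → ℝ} {f : X → ℝ} (hs : ∀ᶠ i in l, s i ∈ Icc 0 1)
    (hlim : ∀ x, Tendsto (fun i => M x (s i)) l (𝓝 (f x))) :
    Tendsto (fun i => envelopeInner η M (s i)) l (𝓝 (∫ x, M x 1 * f x ∂η)) := by
  refine tendsto_integral_filter_of_dominated_convergence (fun x => M x 1 ^ 2)
    (.of_forall fun i => ((hM.measurable 1).mul (hM.measurable (s i))).aestronglyMeasurable)
    (hs.mono fun i hi => ae_of_all _ fun x => ?_) hM.memLp_one.integrable_sq
    (ae_of_all _ fun x => (hlim x).const_mul _)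
  rw [norm_of_nonneg (mul_nonneg (hM.nonneg_one x) (hM.nonneg hi x)), sq]
  exact mul_le_mul_of_nonneg_left (hM.le_one hi x) (hM.nonneg_one x)

theorem continuousWithinAt_envelopeInner (hM : IsMonotoneL2Family η M)
    (hrc : ∀ x, ∀ r ∈ Ico (0 : ℝ) 1, ContinuousWithinAt (M x) (Ici r) r) (hr : r ∈ Ico 0 1) :
    ContinuousWithinAt (envelopeInner η M) (Ici r) r :=
  hM.tendsto_envelopeInner
    (mem_of_superset (Ico_mem_nhdsGE hr.2) fun _ hs => ⟨hr.1.trans hs.1, hs.2.le⟩)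
    fun x => hrc x r hr

theorem integral_sq_supLeft_sub_le (hM : IsMonotoneL2Family η M) {a b δ : ℝ}
    (ha : a ∈ Icc 0 1) (hb : b ≤ 1) (hδ : 0 ≤ δ)
    (hinc : ∀ r ∈ Ico a b, envelopeInner η M r ≤ envelopeInner η M a + δ) :
    ∫ x, (supLeft (M x) a b - M x a) ^ 2 ∂η ≤ δ := by
  have hmono : ∀ x, MonotoneOn (M x) (Icc a 1) := fun x =>
    (hM.monotoneOn x).mono (Icc_subset_Icc_left ha.1)
  have happrox : ∀ n, leftApprox a b n ∈ Icc 0 1 := fun n =>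
    Icc_subset_Icc_left ha.1 (leftApprox_mem_Icc ha.2 hb n)
  have hupper : ∫ x, M x 1 * supLeft (M x) a b ∂η ≤ envelopeInner η M a + δ :=
    le_of_tendsto
      (hM.tendsto_envelopeInner (.of_forall happrox) fun x => tendsto_supLeft (hmono x) ha.2 hb)
      (.of_forall fun n => (leftApprox_eq_or_mem_Ico n).elim
        (fun h => h ▸ le_add_of_nonneg_right hδ) (hinc _))
  have hwidth : ∫ x, (supLeft (M x) a b - M x a) ^ 2 ∂η ≤
      ∫ x, M x 1 * supLeft (M x) a b ∂η - envelopeInner η M a :=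
    integral_sq_sub_le_integral_mul_sub hM.memLp_one (hM.measurable a).aestronglyMeasurable
      (Measurable.iSup fun n => hM.measurable (leftApprox a b n)).aestronglyMeasurable
      (hM.nonneg ha) (fun x => apply_left_le_supLeft (hmono x) ha.2 hb)
      (fun x => supLeft_le (hmono x) ha.2 hb)
  linarith

theorem exists_brackets (hM : IsMonotoneL2Family η M)
    (hrc : ∀ x, ∀ r ∈ Ico (0 : ℝ) 1, ContinuousWithinAt (M x) (Ici r) r) {δ : ℝ} (hδ : 0 ≤ δ)
    {J : ℕ} (hJ : ∫ x, M x 1 ^ 2 ∂η < J * δ) :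
    ∃ lo up : Fin (J + 1) → X → ℝ, (∀ i, ∫ x, (up i x - lo i x) ^ 2 ∂η ≤ δ) ∧
      ∀ r ∈ Icc (0 : ℝ) 1, ∃ i, (∀ x, lo i x ≤ M x r) ∧ ∀ x, M x r ≤ up i x := by
  set t := levelPartition (envelopeInner η M) 0 1 δ
  have hmono := hM.monotoneOn_envelopeInner
  have hcont : ∀ r ∈ Ico (0 : ℝ) 1, ContinuousWithinAt (envelopeInner η M) (Ici r) r :=
    fun _ hr => hM.continuousWithinAt_envelopeInner hrc hr
  have ht : ∀ j, t j ∈ Icc 0 1 := levelPartition_mem_Icc zero_le_one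
  have ht0 : t 0 = 0 := levelPartition_zero zero_le_one
  have htJ : t J = 1 := levelPartition_eq_right_of_lt hmono zero_le_one
    (by rwa [hM.envelopeInner_zero, zero_add, envelopeInner_one])
  have hmono_tail : ∀ j x, MonotoneOn (M x) (Icc (t j) 1) := fun j x =>
    (hM.monotoneOn x).mono (Icc_subset_Icc_left (ht j).1)
  refine ⟨fun i x => M x (t i), fun i x => supLeft (M x) (t i) (t (i + 1 : ℕ)),
    fun i => hM.integral_sq_supLeft_sub_le (ht i) (ht _).2 hδ fun r hr =>
      apply_le_apply_levelPartition_add hmono hcont zero_le_one hr, fun r hr => ?_⟩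
  rcases hr.2.lt_or_eq with hr1 | rfl
  · obtain ⟨j, hjJ, hrj⟩ :=
      exists_mem_Ico_of_le_of_lt (ht0.trans_le hr.1) (hr1.trans_eq htJ.symm)
    exact ⟨⟨j, by omega⟩, fun x => hM.monotoneOn x (ht j) hr hrj.1,
      fun x => apply_le_supLeft (hmono_tail j x) (ht j).2 (ht _).2 hrj⟩
  · refine ⟨Fin.last J, fun x => ?_, fun x => ?_⟩
    · simp [htJ]
    · have := apply_left_le_supLeft (hmono_tail J x) (ht J).2 (ht (J + 1)).2
      simpa [htJ] using this

end IsMonotoneL2Family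

end MonotoneFamily

theorem floor_div_half_sq_add_two_le {N ε : ℝ} (hε : 0 < ε) (hεN : ε ≤ N) :
    ⌊N ^ 2 / (ε ^ 2 / 2)⌋₊ + 1 + 1 ≤ ⌊32 * N ^ 2 / ε ^ 2⌋₊ := by
  have hq : 1 ≤ N ^ 2 / ε ^ 2 := (one_le_div (by positivity)).2 (pow_le_pow_left₀ hε.le hεN 2)
  have h2 : N ^ 2 / (ε ^ 2 / 2) = 2 * (N ^ 2 / ε ^ 2) := by field_simp
  rw [h2, mul_div_assoc]
  refine Nat.le_floor ?_
  push_cast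
  linarith [Nat.floor_le (show 0 ≤ 2 * (N ^ 2 / ε ^ 2) by positivity)]

theorem bracketing_numbers_monotone_class_general
    {X : Type*} [MeasurableSpace X]
    (η : Measure X)
    (M : X → ℝ → ℝ)
    (hM_meas : ∀ r, Measurable (fun x => M x r))
    (hM_mono : ∀ x, MonotoneOn (M x) (Set.Icc (0 : ℝ) 1))
    (hM_rc : ∀ x, ∀ r ∈ Set.Ico (0 : ℝ) 1, ContinuousWithinAt (M x) (Set.Ici r) r)
    (hM_zero : ∀ x, M x 0 = 0)
    (hM_env : MemLp (fun x => M x 1) 2 η)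
    (N : ℝ) (hN : N = (∫ x, (M x 1) ^ 2 ∂η) ^ (1 / 2 : ℝ)) :
    ∀ ε : ℝ, 0 < ε → ε < 4 * Real.sqrt 2 * N →
      ∃ K : ℕ, K ≤ Nat.floor (32 * N ^ 2 / ε ^ 2) ∧
        ∃ lo up : Fin K → X → ℝ,
          (∀ i, (∫ x, (up i x - lo i x) ^ 2 ∂η) ^ (1 / 2 : ℝ) < ε) ∧
          (∀ r ∈ Set.Icc (0 : ℝ) 1, ∃ i,
            (∀ x, lo i x ≤ M x r) ∧ (∀ x, M x r ≤ up i x)) := by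
  intro ε hε hεN
  have hM : IsMonotoneL2Family η M := ⟨hM_meas, hM_mono, hM_zero, hM_env⟩
  have hN2 : ∫ x, M x 1 ^ 2 ∂η = N ^ 2 := by
    rw [hN, ← sqrt_eq_rpow, sq_sqrt (integral_nonneg fun _ => sq_nonneg _)]
  have hε2 : 0 < ε ^ 2 := by positivity
  rcases lt_or_ge N ε with hNε | hεN'
  · have hε2N : ε ^ 2 ≤ 32 * N ^ 2 := by
      have := pow_lt_pow_left₀ hεN hε.le two_ne_zero
      rw [mul_pow, mul_pow, sq_sqrt zero_le_two] at this
      linarith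
    refine ⟨1, Nat.le_floor ?_, fun _ _ => 0, fun _ x => M x 1, fun _ => ?_,
      fun r hr => ⟨0, hM.nonneg hr, hM.le_one hr⟩⟩
    · rwa [Nat.cast_one, one_le_div hε2]
    · simpa only [sub_zero, ← hN] using hNε
  · have hJ : ∫ x, M x 1 ^ 2 ∂η < (⌊N ^ 2 / (ε ^ 2 / 2)⌋₊ + 1 : ℕ) * (ε ^ 2 / 2) := by
      rw [hN2]
      exact_mod_cast (div_lt_iff₀ (by positivity)).1 (Nat.lt_floor_add_one _)
    obtain ⟨lo, up, hwidth, hcover⟩ := hM.exists_brackets hM_rc (by positivity) hJ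
    refine ⟨_, floor_div_half_sq_add_two_le hε hεN', lo, up, fun i => ?_, hcover⟩
    rw [← sqrt_eq_rpow, sqrt_lt' hε]
    linarith [hwidth i]

/-- For a class `G = {M(·,r) : r ∈ [0,1]}` generated by a function monotone
and right-continuous in `r` with `M(·,0) = 0` and square-integrable envelope `M(·,1)`,
for every `0 < ε < 4√2·‖M(·,1)‖_{L²(η)}` the class can be covered by at most
`⌊32‖M(·,1)‖²/ε²⌋` brackets of `L²(η)`-length less than `ε`. -/
theorem bracketing_numbers_monotone_class
    {X : Type*} [MeasurableSpace X]
    (η : Measure X) [IsProbabilityMeasure η]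
    (M : X → ℝ → ℝ)
    (hM_meas : ∀ r, Measurable (fun x => M x r))
    (hM_mono : ∀ x, MonotoneOn (M x) (Set.Icc (0 : ℝ) 1))
    (hM_rc : ∀ x, ∀ r ∈ Set.Ico (0 : ℝ) 1, ContinuousWithinAt (M x) (Set.Ici r) r)
    (hM_zero : ∀ x, M x 0 = 0)
    (hM_env : MemLp (fun x => M x 1) 2 η)
    (N : ℝ) (hN : N = (∫ x, (M x 1) ^ 2 ∂η) ^ (1 / 2 : ℝ)) :
    ∀ ε : ℝ, 0 < ε → ε < 4 * Real.sqrt 2 * N →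
      ∃ K : ℕ, K ≤ Nat.floor (32 * N ^ 2 / ε ^ 2) ∧
        ∃ lo up : Fin K → X → ℝ,
          (∀ i, (∫ x, (up i x - lo i x) ^ 2 ∂η) ^ (1 / 2 : ℝ) < ε) ∧
          (∀ r ∈ Set.Icc (0 : ℝ) 1, ∃ i,
            (∀ x, lo i x ≤ M x r) ∧ (∀ x, M x r ≤ up i x)) :=
  bracketing_numbers_monotone_class_general η M hM_meas hM_mono hM_rc hM_zero hM_env N hN
end

section
/- Suppose c ∈ C_b^s(X²) is s-Hölder continuous with constant L_c (0 < s ≤ 1), λ > 0, μ, ν probability measures on X, and g: X → ℝ bounded with ‖g‖_∞ ≤ ‖c‖_∞. Then the function f(x) = -λ log ∫ exp((g(y)-c(x,y))/λ) dν(y) is s-Hölder continuous with Hölder constant at most L_c; that is, |f(x) - f(x')| ≤ L_c d(x,x')^s for all x, x'. -/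
open MeasureTheory Real

/-! The soft-min `φ ↦ -λ log ∫ exp (φ / λ) dν` is `1`-Lipschitz for the supremum norm: if
`φ ≤ ψ + δ` pointwise then `∫ exp φ ≤ exp δ * ∫ exp ψ`, and taking logarithms gives the bound.
Applied to `φ_x y = g y - c x y`, whose oscillation in `x` is at most `L d(x, x')^s` uniformly in
`y`, this transfers the Hölder bound of `c` to the potential. -/

section LogIntegralExp

variable {α : Type*} [MeasurableSpace α] {μ : Measure α}

lemma integrable_exp_of_le [IsFiniteMeasure μ] {φ : α → ℝ} {C : ℝ} (hφ : Measurable φ)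
    (hφC : ∀ y, φ y ≤ C) : Integrable (fun y ↦ exp (φ y)) μ :=
  .of_bound hφ.exp.aestronglyMeasurable (exp C) <| ae_of_all _ fun y ↦ by
    rw [norm_of_nonneg (exp_pos _).le]
    exact exp_le_exp.2 (hφC y)

lemma log_integral_exp_le_add [NeZero μ] {φ ψ : α → ℝ} {δ : ℝ}
    (hφ : Integrable (fun y ↦ exp (φ y)) μ) (hψ : Integrable (fun y ↦ exp (ψ y)) μ)
    (hφψ : ∀ y, φ y ≤ ψ y + δ) :
    log (∫ y, exp (φ y) ∂μ) ≤ log (∫ y, exp (ψ y) ∂μ) + δ := by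
  have hmono : ∫ y, exp (φ y) ∂μ ≤ exp δ * ∫ y, exp (ψ y) ∂μ := by
    rw [← integral_const_mul]
    refine integral_mono hφ (hψ.const_mul _) fun y ↦ ?_
    rw [← exp_add, add_comm]
    exact exp_le_exp.2 (hφψ y)
  calc log (∫ y, exp (φ y) ∂μ) ≤ log (exp δ * ∫ y, exp (ψ y) ∂μ) :=
        log_le_log (integral_exp_pos hφ) hmono
    _ = log (∫ y, exp (ψ y) ∂μ) + δ := by
        rw [log_mul (exp_ne_zero _) (integral_exp_pos hψ).ne', log_exp, add_comm]

lemma abs_log_integral_exp_sub_le [NeZero μ] {φ ψ : α → ℝ} {δ : ℝ}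
    (hφ : Integrable (fun y ↦ exp (φ y)) μ) (hψ : Integrable (fun y ↦ exp (ψ y)) μ)
    (hφψ : ∀ y, |φ y - ψ y| ≤ δ) :
    |log (∫ y, exp (φ y) ∂μ) - log (∫ y, exp (ψ y) ∂μ)| ≤ δ := by
  rw [abs_sub_le_iff]
  constructor
  · linarith [log_integral_exp_le_add hφ hψ fun y ↦ by linarith [(abs_le.1 (hφψ y)).2]]
  · linarith [log_integral_exp_le_add hψ hφ fun y ↦ by linarith [(abs_le.1 (hφψ y)).1]]

end LogIntegralExp

theorem softmin_potential_holder_general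
    {X : Type*} [MetricSpace X] [MeasurableSpace X] [BorelSpace X]
    (ν : Measure X) [IsProbabilityMeasure ν]
    (c : X → X → ℝ) (Cc : ℝ)
    (hc_cont : Continuous (Function.uncurry c))
    (hc_nonneg : ∀ x y, 0 ≤ c x y)
    (s L : ℝ)
    (hc_holder : ∀ x x' y, |c x y - c x' y| ≤ L * dist x x' ^ s)
    (lam : ℝ) (hlam : 0 < lam)
    (g : X → ℝ) (hg_meas : Measurable g) (hg_bdd : ∀ y, |g y| ≤ Cc)
    (f : X → ℝ)
    (hf : ∀ x, f x = -lam * Real.log (∫ y, Real.exp ((g y - c x y) / lam) ∂ν)) :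
    ∀ x x', |f x - f x'| ≤ L * dist x x' ^ s := by
  intro x x'
  have hint : ∀ z, Integrable (fun y ↦ exp ((g y - c z y) / lam)) ν := fun z ↦
    integrable_exp_of_le (C := Cc / lam)
      ((hg_meas.sub (hc_cont.uncurry_left z).measurable).div_const lam) fun y ↦
        div_le_div_of_nonneg_right (by linarith [(abs_le.1 (hg_bdd y)).2, hc_nonneg z y]) hlam.le
  have hosc : ∀ y, |(g y - c x y) / lam - (g y - c x' y) / lam| ≤ L * dist x x' ^ s / lam :=
    fun y ↦ by
      rw [← sub_div, abs_div, abs_of_pos hlam, sub_sub_sub_cancel_left, abs_sub_comm]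
      exact div_le_div_of_nonneg_right (hc_holder x x' y) hlam.le
  calc |f x - f x'|
      = lam * |log (∫ y, exp ((g y - c x y) / lam) ∂ν) -
          log (∫ y, exp ((g y - c x' y) / lam) ∂ν)| := by
        rw [hf, hf, ← mul_sub, abs_mul, abs_neg, abs_of_pos hlam]
    _ ≤ lam * (L * dist x x' ^ s / lam) :=
        mul_le_mul_of_nonneg_left (abs_log_integral_exp_sub_le (hint x) (hint x') hosc) hlam.le
    _ = L * dist x x' ^ s := mul_div_cancel₀ _ hlam.ne'

/-- If `c` is `s`-Hölder in its first argument with constant `L_c` and `g` is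
bounded, then the soft-min potential `f(x) = -λ log ∫ exp((g y - c x y)/λ) dν(y)` is
`s`-Hölder with constant at most `L_c`. -/
theorem softmin_potential_holder
    {X : Type*} [MetricSpace X] [MeasurableSpace X] [BorelSpace X]
    (ν : Measure X) [IsProbabilityMeasure ν]
    (c : X → X → ℝ) (Cc : ℝ)
    (hc_cont : Continuous (Function.uncurry c))
    (hc_nonneg : ∀ x y, 0 ≤ c x y)
    (hc_bdd : ∀ x y, c x y ≤ Cc)
    (s L : ℝ) (hs : 0 < s) (hs1 : s ≤ 1) (hL : 0 ≤ L)
    (hc_holder : ∀ x x' y, |c x y - c x' y| ≤ L * dist x x' ^ s)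
    (lam : ℝ) (hlam : 0 < lam)
    (g : X → ℝ) (hg_meas : Measurable g) (hg_bdd : ∀ y, |g y| ≤ Cc)
    (f : X → ℝ)
    (hf : ∀ x, f x = -lam * Real.log (∫ y, Real.exp ((g y - c x y) / lam) ∂ν)) :
    ∀ x x', |f x - f x'| ≤ L * dist x x' ^ s :=
  softmin_potential_holder_general ν c Cc hc_cont hc_nonneg s L hc_holder lam hlam g hg_meas hg_bdd
    f hf
end
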